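/- If (W*, H*) is a global minimizer of F(W,H) = f(W H^T) + (λ/2)(‖W‖_F² + ‖H‖_F²) over R^{m×k} × R^{n×k}, and the convex problem min_X f(X) + λ‖X‖_* admits a global minimizer of rank at most k, then X* := W* (H*)^T is a global minimizer of f(X) + λ‖X‖_*. -/

import Mathlib

open Matrix

noncomputable def frobNorm {m n : ℕ} (X : Matrix (Fin m) (Fin n) ℝ) : ℝ :=
  Real.sqrt (∑ i, ∑ j, (X i j) ^ 2)

noncomputable def nuclearNorm {m n : ℕ} (X : Matrix (Fin m) (Fin n) ℝ) : ℝ :=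
  ∑ i, Real.sqrt (((by simpa [Matrix.conjTranspose_eq_transpose_of_trivial] using
    Matrix.isHermitian_conjTranspose_mul_self X : (Xᵀ * X).IsHermitian)).eigenvalues i)

/-!
Along `X = W Hᵀ` the factorized objective dominates the convex one, because
`2 ‖W Hᵀ‖_* ≤ ‖W‖_F² + ‖H‖_F²`: writing `σᵢ = uᵢᵀ W Hᵀ vᵢ = ⟪Wᵀ uᵢ, Hᵀ vᵢ⟫` with the singular
vectors `uᵢ, vᵢ` of `W Hᵀ`, AM–GM bounds `2 σᵢ` by `‖Wᵀ uᵢ‖² + ‖Hᵀ vᵢ‖²`, and Bessel's inequality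
bounds the sums of these by `‖W‖_F²` and `‖H‖_F²`. Equality holds for the balanced factorization
`W = U Σ^{1/2}`, `H = V Σ^{1/2}` of the SVD, which fits into `k` columns when `rank X ≤ k`. So
`F (W* H*ᵀ)` is at most the factorized minimum, which is at most the factorized objective at the
balanced factorization of a rank-`k` minimizer `X̂`, which equals `F X̂ = min F`.
-/

lemma Function.Injective.sum_extend_zero {α β M : Type*} [Fintype α] [Fintype β]
    [AddCommMonoid M] {e : α → β} (he : Function.Injective e) (g : α → M) :
    ∑ j, Function.extend e g 0 j = ∑ i, g i := by
  classical
  rw [← Finset.sum_subset (Finset.subset_univ (Finset.univ.map ⟨e, he⟩))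
    fun j _ hj => Function.extend_apply' g (0 : β → M) j (by simpa using hj)]
  simp [he.extend_apply]

lemma Function.Injective.sum_extend_mul_extend {α β R : Type*} [Fintype α] [Fintype β]
    [CommSemiring R] {S : Finset α} {e : S → β} (he : Function.Injective e) (f g : α → R)
    (hf : ∀ i ∉ S, f i = 0) :
    ∑ j, Function.extend e (fun i : S => f i) 0 j * Function.extend e (fun i : S => g i) 0 j =
      ∑ i, f i * g i := by
  have h := Function.extend_mul e (fun i : S => f i) (fun i : S => g i) 0 0
  rw [mul_zero] at h
  simp_rw [← Pi.mul_apply (Function.extend e _ 0), ← h, he.sum_extend_zero, Pi.mul_apply]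
  rw [Finset.sum_coe_sort S (fun i => f i * g i)]
  exact Finset.sum_subset (Finset.subset_univ S) fun i _ hi => by rw [hf i hi, zero_mul]

namespace Matrix

lemma isHermitian_transpose_mul_self {ι κ : Type*} [Fintype ι] (X : Matrix ι κ ℝ) :
    (Xᵀ * X).IsHermitian := by
  simpa using isHermitian_conjTranspose_mul_self X

section SingularValues

variable {ι κ : Type*} [Fintype ι] [Fintype κ] [DecidableEq κ] (X : Matrix ι κ ℝ)

noncomputable def rightSingularMatrix : Matrix κ κ ℝ :=
  (isHermitian_transpose_mul_self X).eigenvectorUnitary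

noncomputable def rightSingularVector (i : κ) : κ → ℝ := (rightSingularMatrix X)ᵀ i

noncomputable def singularValue (i : κ) : ℝ :=
  √((isHermitian_transpose_mul_self X).eigenvalues i)

/-- Since `0⁻¹ = 0`, this vector is `0` when `singularValue X i = 0`. -/
noncomputable def leftSingularVector (i : κ) : ι → ℝ :=
  (singularValue X i)⁻¹ • X *ᵥ rightSingularVector X i

lemma rightSingularMatrix_mul_transpose :
    rightSingularMatrix X * (rightSingularMatrix X)ᵀ = 1 := by
  have h := mem_unitaryGroup_iff.mp (isHermitian_transpose_mul_self X).eigenvectorUnitary.2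
  rw [star_eq_conjTranspose, conjTranspose_eq_transpose_of_trivial] at h
  exact h

lemma transpose_rightSingularMatrix_mul :
    (rightSingularMatrix X)ᵀ * rightSingularMatrix X = 1 := by
  have h := mem_unitaryGroup_iff'.mp (isHermitian_transpose_mul_self X).eigenvectorUnitary.2
  rw [star_eq_conjTranspose, conjTranspose_eq_transpose_of_trivial] at h
  exact h

lemma singularValue_nonneg (i : κ) : 0 ≤ singularValue X i :=
  Real.sqrt_nonneg _

lemma eigenvalues_transpose_mul_self_nonneg (i : κ) :
    0 ≤ (isHermitian_transpose_mul_self X).eigenvalues i := by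
  simpa using (posSemidef_conjTranspose_mul_self X).eigenvalues_nonneg i

lemma rightSingularVector_dotProduct (i j : κ) :
    rightSingularVector X i ⬝ᵥ rightSingularVector X j = if i = j then 1 else 0 := by
  simpa [mul_apply, dotProduct, one_apply, rightSingularVector] using
    congrFun (congrFun (transpose_rightSingularMatrix_mul X) i) j

lemma transpose_mul_self_mulVec_rightSingularVector (i : κ) :
    (Xᵀ * X) *ᵥ rightSingularVector X i = singularValue X i ^ 2 • rightSingularVector X i := by
  rw [singularValue, Real.sq_sqrt (eigenvalues_transpose_mul_self_nonneg X i)]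
  exact (isHermitian_transpose_mul_self X).mulVec_eigenvectorBasis i

lemma mulVec_rightSingularVector_dotProduct (i j : κ) :
    X *ᵥ rightSingularVector X i ⬝ᵥ X *ᵥ rightSingularVector X j =
      if i = j then singularValue X i ^ 2 else 0 := by
  rw [← vecMul_transpose, ← dotProduct_mulVec, mulVec_mulVec,
    transpose_mul_self_mulVec_rightSingularVector, dotProduct_smul,
    rightSingularVector_dotProduct]
  split_ifs with h <;> simp [h]

lemma mulVec_rightSingularVector_eq_zero {i : κ} (h : singularValue X i = 0) :
    X *ᵥ rightSingularVector X i = 0 := by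
  simpa [h] using mulVec_rightSingularVector_dotProduct X i i

lemma singularValue_smul_leftSingularVector (i : κ) :
    singularValue X i • leftSingularVector X i = X *ᵥ rightSingularVector X i := by
  by_cases h : singularValue X i = 0
  · simp [h, mulVec_rightSingularVector_eq_zero X h]
  · simp [leftSingularVector, smul_smul, h]

lemma leftSingularVector_dotProduct_mulVec (i : κ) :
    leftSingularVector X i ⬝ᵥ X *ᵥ rightSingularVector X i = singularValue X i := by
  rw [leftSingularVector, smul_dotProduct, mulVec_rightSingularVector_dotProduct, if_pos rfl,
    smul_eq_mul]
  by_cases h : singularValue X i = 0 <;> field_simp [h]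

lemma leftSingularVector_dotProduct (i j : κ) :
    leftSingularVector X i ⬝ᵥ leftSingularVector X j =
      if i = j ∧ singularValue X i ≠ 0 then 1 else 0 := by
  simp only [leftSingularVector, smul_dotProduct, dotProduct_smul,
    mulVec_rightSingularVector_dotProduct, smul_eq_mul]
  by_cases hij : i = j
  · subst hij
    by_cases h : singularValue X i = 0 <;> field_simp [h] <;> simp [h]
  · simp [hij]

lemma sum_singularValue_smul_vecMulVec :
    ∑ i, singularValue X i • vecMulVec (leftSingularVector X i) (rightSingularVector X i) = X := by
  ext a b
  simp_rw [← smul_vecMulVec, singularValue_smul_leftSingularVector]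
  have h : X * rightSingularMatrix X * (rightSingularMatrix X)ᵀ = X := by
    rw [Matrix.mul_assoc, rightSingularMatrix_mul_transpose, Matrix.mul_one]
  simpa [Matrix.sum_apply, vecMulVec_apply, mul_apply, rightSingularVector, mulVec,
    dotProduct] using congrFun (congrFun h a) b

lemma card_singularValue_ne_zero :
    (Finset.univ.filter fun i => singularValue X i ≠ 0).card = X.rank := by
  rw [← rank_transpose_mul_self, (isHermitian_transpose_mul_self X).rank_eq_card_non_zero_eigs,
    Fintype.card_subtype]
  simp [singularValue, Real.sqrt_eq_zero (eigenvalues_transpose_mul_self_nonneg X _)]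

end SingularValues

lemma sum_sq_dotProduct_le {ι α : Type*} [Fintype ι] [Fintype α] (u : ι → α → ℝ)
    (horth : Pairwise fun i j => u i ⬝ᵥ u j = 0) (hle : ∀ i, u i ⬝ᵥ u i ≤ 1) (w : α → ℝ) :
    ∑ i, (u i ⬝ᵥ w) ^ 2 ≤ w ⬝ᵥ w := by
  set s := ∑ i, (u i ⬝ᵥ w) • u i
  have hsw : s ⬝ᵥ w = ∑ i, (u i ⬝ᵥ w) ^ 2 := by
    simp only [s, sum_dotProduct, smul_dotProduct, smul_eq_mul, sq]
  have hus (i) : u i ⬝ᵥ s = (u i ⬝ᵥ w) * (u i ⬝ᵥ u i) := by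
    simp only [s, dotProduct_sum, dotProduct_smul, smul_eq_mul]
    exact Finset.sum_eq_single i (fun j _ hji => by rw [horth hji.symm, mul_zero])
      (by simp)
  have hss : s ⬝ᵥ s ≤ ∑ i, (u i ⬝ᵥ w) ^ 2 := by
    simp only [s, sum_dotProduct, smul_dotProduct, smul_eq_mul, hus]
    refine Finset.sum_le_sum fun i _ => ?_
    nlinarith [hle i, sq_nonneg (u i ⬝ᵥ w)]
  have hnonneg : 0 ≤ (w - s) ⬝ᵥ (w - s) := Fintype.sum_nonneg fun _ => mul_self_nonneg _
  rw [sub_dotProduct, dotProduct_sub, dotProduct_sub, dotProduct_comm w s, hsw] at hnonneg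
  linarith

lemma two_mul_dotProduct_le {α : Type*} [Fintype α] (p q : α → ℝ) :
    2 * (p ⬝ᵥ q) ≤ p ⬝ᵥ p + q ⬝ᵥ q := by
  simp only [dotProduct, Finset.mul_sum, ← Finset.sum_add_distrib, ← mul_assoc]
  exact Finset.sum_le_sum fun c _ => by nlinarith [two_mul_le_add_sq (p c) (q c)]

lemma sum_mulVec_transpose_dotProduct_le {ι α β : Type*} [Fintype ι] [Fintype α] [Fintype β]
    (u : ι → α → ℝ) (horth : Pairwise fun i j => u i ⬝ᵥ u j = 0) (hle : ∀ i, u i ⬝ᵥ u i ≤ 1)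
    (W : Matrix α β ℝ) :
    ∑ i, Wᵀ *ᵥ u i ⬝ᵥ Wᵀ *ᵥ u i ≤ ∑ a, ∑ c, W a c ^ 2 := by
  have hcol (i c) : (Wᵀ *ᵥ u i) c = u i ⬝ᵥ Wᵀ c := by
    simp [mulVec, dotProduct, mul_comm]
  calc ∑ i, Wᵀ *ᵥ u i ⬝ᵥ Wᵀ *ᵥ u i = ∑ c, ∑ i, (u i ⬝ᵥ Wᵀ c) ^ 2 := by
        rw [Finset.sum_comm]
        refine Finset.sum_congr rfl fun i _ => ?_
        rw [dotProduct]
        simp only [hcol, sq]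
    _ ≤ ∑ c, Wᵀ c ⬝ᵥ Wᵀ c := Finset.sum_le_sum fun c _ => sum_sq_dotProduct_le u horth hle _
    _ = ∑ a, ∑ c, W a c ^ 2 := by
        simp only [dotProduct, transpose_apply, ← sq]
        exact Finset.sum_comm

lemma exists_mul_transpose_eq_of_cols_eq_zero {ι κ α β R : Type*} [Fintype α] [Fintype β]
    [CommSemiring R] (W₀ : Matrix ι α R) (H₀ : Matrix κ α R) (S : Finset α)
    (hS : S.card ≤ Fintype.card β) (hW : ∀ a, ∀ i ∉ S, W₀ a i = 0)
    (hH : ∀ b, ∀ i ∉ S, H₀ b i = 0) :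
    ∃ (W : Matrix ι β R) (H : Matrix κ β R), W * Hᵀ = W₀ * H₀ᵀ ∧
      (∀ a, ∑ j, W a j ^ 2 = ∑ i, W₀ a i ^ 2) ∧ ∀ b, ∑ j, H b j ^ 2 = ∑ i, H₀ b i ^ 2 := by
  obtain ⟨e⟩ := Function.Embedding.nonempty_of_card_le (α := S) (β := β) (by simpa using hS)
  refine ⟨of fun a => Function.extend e (fun i : S => W₀ a i) 0,
    of fun b => Function.extend e (fun i : S => H₀ b i) 0, ?_, fun a => ?_, fun b => ?_⟩
  · ext a b
    simp only [mul_apply, transpose_apply, of_apply]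
    exact e.injective.sum_extend_mul_extend _ _ (hW a)
  · simpa only [sq, of_apply] using e.injective.sum_extend_mul_extend _ _ (hW a)
  · simpa only [sq, of_apply] using e.injective.sum_extend_mul_extend _ _ (hH b)

lemma sum_sum_sqrt_mul_sq {γ κ : Type*} [Fintype γ] [Fintype κ] {c : κ → ℝ}
    (hc : ∀ i, 0 ≤ c i) (x : κ → γ → ℝ) :
    ∑ a, ∑ i, (√(c i) * x i a) ^ 2 = ∑ i, c i * (x i ⬝ᵥ x i) := by
  rw [Finset.sum_comm]
  simp_rw [mul_pow, Real.sq_sqrt (hc _), ← Finset.mul_sum, dotProduct, sq]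

variable {ι κ β : Type*} [Fintype ι] [Fintype κ] [DecidableEq κ] [Fintype β]

lemma two_mul_sum_singularValue_mul_transpose_le (W : Matrix ι β ℝ) (H : Matrix κ β ℝ) :
    2 * ∑ i, singularValue (W * Hᵀ) i ≤ ∑ a, ∑ c, W a c ^ 2 + ∑ b, ∑ c, H b c ^ 2 := by
  set X := W * Hᵀ
  have hσ (i : κ) : singularValue X i =
      Wᵀ *ᵥ leftSingularVector X i ⬝ᵥ Hᵀ *ᵥ rightSingularVector X i := by
    rw [← leftSingularVector_dotProduct_mulVec, ← mulVec_mulVec, dotProduct_mulVec,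
      ← mulVec_transpose]
  have hu := sum_mulVec_transpose_dotProduct_le (leftSingularVector X)
    (fun i j hij => by simp [leftSingularVector_dotProduct, hij])
    (fun i => by rw [leftSingularVector_dotProduct]; split_ifs <;> norm_num) W
  have hv := sum_mulVec_transpose_dotProduct_le (rightSingularVector X)
    (fun i j hij => by simp [rightSingularVector_dotProduct, hij])
    (fun i => by simp [rightSingularVector_dotProduct]) H
  calc 2 * ∑ i, singularValue X i
      = ∑ i, 2 * (Wᵀ *ᵥ leftSingularVector X i ⬝ᵥ Hᵀ *ᵥ rightSingularVector X i) := by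
        rw [Finset.mul_sum]
        simp_rw [hσ]
    _ ≤ ∑ i, (Wᵀ *ᵥ leftSingularVector X i ⬝ᵥ Wᵀ *ᵥ leftSingularVector X i +
          Hᵀ *ᵥ rightSingularVector X i ⬝ᵥ Hᵀ *ᵥ rightSingularVector X i) :=
        Finset.sum_le_sum fun i _ => two_mul_dotProduct_le _ _
    _ ≤ _ := by
        rw [Finset.sum_add_distrib]
        exact add_le_add hu hv

lemma exists_mul_transpose_eq_of_rank_le (X : Matrix ι κ ℝ)
    (hk : X.rank ≤ Fintype.card β) :
    ∃ (W : Matrix ι β ℝ) (H : Matrix κ β ℝ), W * Hᵀ = X ∧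
      ∑ a, ∑ j, W a j ^ 2 = ∑ i, singularValue X i ∧
      ∑ b, ∑ j, H b j ^ 2 = ∑ i, singularValue X i := by
  obtain ⟨W, H, hWH, hW, hH⟩ := exists_mul_transpose_eq_of_cols_eq_zero
    (of fun a i => √(singularValue X i) * leftSingularVector X i a)
    (of fun b i => √(singularValue X i) * rightSingularVector X i b)
    (Finset.univ.filter fun i => singularValue X i ≠ 0) (card_singularValue_ne_zero X ▸ hk)
    (fun a i hi => by simp_all) (fun b i hi => by simp_all)
  refine ⟨W, H, ?_, ?_, ?_⟩
  · rw [hWH]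
    conv_rhs => rw [← sum_singularValue_smul_vecMulVec X]
    ext a b
    simp only [mul_apply, of_apply, transpose_apply, Matrix.sum_apply, smul_apply,
      vecMulVec_apply, smul_eq_mul]
    refine Finset.sum_congr rfl fun i _ => ?_
    rw [mul_mul_mul_comm, Real.mul_self_sqrt (singularValue_nonneg X i)]
  · simp only [hW, of_apply]
    rw [sum_sum_sqrt_mul_sq (singularValue_nonneg X)]
    refine Finset.sum_congr rfl fun i _ => ?_
    by_cases h : singularValue X i = 0 <;> simp [leftSingularVector_dotProduct, h]
  · simp only [hH, of_apply]
    rw [sum_sum_sqrt_mul_sq (singularValue_nonneg X)]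
    simp [rightSingularVector_dotProduct]

end Matrix

lemma frobNorm_sq {m n : ℕ} (X : Matrix (Fin m) (Fin n) ℝ) :
    frobNorm X ^ 2 = ∑ i, ∑ j, X i j ^ 2 :=
  Real.sq_sqrt (by positivity)

lemma nuclearNorm_eq_sum_singularValue {m n : ℕ} (X : Matrix (Fin m) (Fin n) ℝ) :
    nuclearNorm X = ∑ i, singularValue X i :=
  rfl

lemma two_mul_nuclearNorm_mul_transpose_le {m n k : ℕ} (W : Matrix (Fin m) (Fin k) ℝ)
    (H : Matrix (Fin n) (Fin k) ℝ) :
    2 * nuclearNorm (W * Hᵀ) ≤ frobNorm W ^ 2 + frobNorm H ^ 2 := by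
  rw [nuclearNorm_eq_sum_singularValue, frobNorm_sq, frobNorm_sq]
  exact two_mul_sum_singularValue_mul_transpose_le W H

lemma exists_balanced_factorization_of_rank_le {m n k : ℕ} (X : Matrix (Fin m) (Fin n) ℝ)
    (hk : X.rank ≤ k) :
    ∃ (W : Matrix (Fin m) (Fin k) ℝ) (H : Matrix (Fin n) (Fin k) ℝ),
      W * Hᵀ = X ∧ frobNorm W ^ 2 + frobNorm H ^ 2 = 2 * nuclearNorm X := by
  obtain ⟨W, H, hWH, hW, hH⟩ := exists_mul_transpose_eq_of_rank_le (β := Fin k) X (by simpa)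
  refine ⟨W, H, hWH, ?_⟩
  rw [frobNorm_sq, frobNorm_sq, hW, hH, nuclearNorm_eq_sum_singularValue]
  ring

theorem mf_min_gives_mc_min_general {m n k : ℕ}
    (f : Matrix (Fin m) (Fin n) ℝ → ℝ)
    (lam : ℝ) (hlam : 0 < lam)
    (Wstar : Matrix (Fin m) (Fin k) ℝ) (Hstar : Matrix (Fin n) (Fin k) ℝ)
    (hmin : IsMinOn
      (fun p : Matrix (Fin m) (Fin k) ℝ × Matrix (Fin n) (Fin k) ℝ =>
        f (p.1 * p.2ᵀ) + lam / 2 * (frobNorm p.1 ^ 2 + frobNorm p.2 ^ 2))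
      Set.univ (Wstar, Hstar))
    (hconv : ∃ Xhat : Matrix (Fin m) (Fin n) ℝ,
      IsMinOn (fun X => f X + lam * nuclearNorm X) Set.univ Xhat ∧ Xhat.rank ≤ k) :
    IsMinOn (fun X => f X + lam * nuclearNorm X) Set.univ (Wstar * Hstarᵀ) := by
  obtain ⟨Xhat, hXhat, hrank⟩ := hconv
  obtain ⟨What, Hhat, rfl, hnorm⟩ := exists_balanced_factorization_of_rank_le Xhat hrank
  intro X _
  have hstar := mul_le_mul_of_nonneg_left
    (two_mul_nuclearNorm_mul_transpose_le Wstar Hstar) hlam.le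
  calc f (Wstar * Hstarᵀ) + lam * nuclearNorm (Wstar * Hstarᵀ)
      ≤ f (Wstar * Hstarᵀ) + lam / 2 * (frobNorm Wstar ^ 2 + frobNorm Hstar ^ 2) := by
        linarith
    _ ≤ f (What * Hhatᵀ) + lam / 2 * (frobNorm What ^ 2 + frobNorm Hhat ^ 2) :=
        hmin (Set.mem_univ (What, Hhat))
    _ = f (What * Hhatᵀ) + lam * nuclearNorm (What * Hhatᵀ) := by
        rw [hnorm]
        ring
    _ ≤ f X + lam * nuclearNorm X := hXhat (Set.mem_univ X)

/-- If `(W*, H*)` globally minimizes the factorized objective and the lifted convex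
problem has a global minimizer of rank at most `k`, then `X* = W* (H*)ᵀ` globally
minimizes the lifted convex objective. -/
theorem mf_min_gives_mc_min {m n k : ℕ}
    (f : Matrix (Fin m) (Fin n) ℝ → ℝ) (hf : ConvexOn ℝ Set.univ f)
    (lam : ℝ) (hlam : 0 < lam)
    (Wstar : Matrix (Fin m) (Fin k) ℝ) (Hstar : Matrix (Fin n) (Fin k) ℝ)
    (hmin : IsMinOn
      (fun p : Matrix (Fin m) (Fin k) ℝ × Matrix (Fin n) (Fin k) ℝ =>
        f (p.1 * p.2ᵀ) + lam / 2 * (frobNorm p.1 ^ 2 + frobNorm p.2 ^ 2))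
      Set.univ (Wstar, Hstar))
    (hconv : ∃ Xhat : Matrix (Fin m) (Fin n) ℝ,
      IsMinOn (fun X => f X + lam * nuclearNorm X) Set.univ Xhat ∧ Xhat.rank ≤ k) :
    IsMinOn (fun X => f X + lam * nuclearNorm X) Set.univ (Wstar * Hstarᵀ) :=
  mf_min_gives_mc_min_general f lam hlam Wstar Hstar hmin hconv
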